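/- Let 𝒪 be an algebra of observables on a nonempty set Ω and P an observable probability. For every co-zero set U: P(U) = sup{P(F) : F a zero set, F ⊆ U} = sup{∫ X dP : X ∈ 𝒪, X ⪯ U}. -/

import Mathlib

open Filter MeasureTheory Topology

variable {Ω : Type*}

/-- A family `𝒪` of real functions on `Ω` is an algebra of observables: for every `n ≥ 1`,
all `X₁, …, Xₙ ∈ 𝒪` and every `φ` continuous on the image of `(X₁, …, Xₙ)`,
the composite `ω ↦ φ (X₁ ω, …, Xₙ ω)` belongs to `𝒪`. -/
def IsObsAlg (o : Set (Ω → ℝ)) : Prop :=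
  ∀ n : ℕ, 0 < n → ∀ X : Fin n → Ω → ℝ, (∀ i, X i ∈ o) →
    ∀ φ : (Fin n → ℝ) → ℝ,
      ContinuousOn φ (Set.range fun ω => fun i => X i ω) →
      (fun ω => φ fun i => X i ω) ∈ o

/-- `F ⊆ Ω` is a zero set if `F = X⁻¹({0})` for some `X ∈ 𝒪`. -/
def IsZeroSet (o : Set (Ω → ℝ)) (F : Set Ω) : Prop :=
  ∃ X ∈ o, F = X ⁻¹' {0}

/-- A co-zero set is the complement of a zero set. -/
def IsCozeroSet (o : Set (Ω → ℝ)) (U : Set Ω) : Prop :=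
  IsZeroSet o Uᶜ

/-- The observable sets are the zero sets together with the co-zero sets. -/
def IsObsSet (o : Set (Ω → ℝ)) (A : Set Ω) : Prop :=
  IsZeroSet o A ∨ IsCozeroSet o A

/-- An observable probability: additive on disjoint observable sets with observable union,
nonnegative on observable sets, normalized, with monotone convergence along increasing
sequences of co-zero sets whose union is a co-zero set. -/
def IsObsProb (o : Set (Ω → ℝ)) (P : Set Ω → ℝ) : Prop :=
  (∀ A B : Set Ω, IsObsSet o A → IsObsSet o B → Disjoint A B →
    IsObsSet o (A ∪ B) → P (A ∪ B) = P A + P B) ∧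
  (∀ A : Set Ω, IsObsSet o A → 0 ≤ P A) ∧
  (P Set.univ = 1) ∧
  (∀ (U : ℕ → Set Ω) (V : Set Ω), (∀ i, IsCozeroSet o (U i)) → Monotone U →
    IsCozeroSet o V → (⋃ i, U i) = V →
    Tendsto (fun i => P (U i)) atTop (𝓝 (P V)))

/-- `μ` is the distribution of `X` under `P`: a Borel probability measure on `ℝ` with
`μ U = P (X ⁻¹' U)` for every open `U ⊆ ℝ`. -/
def IsDistribution (o : Set (Ω → ℝ)) (P : Set Ω → ℝ) (X : Ω → ℝ)
    (μ : Measure ℝ) : Prop :=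
  IsProbabilityMeasure μ ∧
  ∀ U : Set ℝ, IsOpen U → μ U = ENNReal.ofReal (P (X ⁻¹' U))

/-- Membership in `𝒪^∞`: a bounded member of `𝒪`. -/
def MemBdd (o : Set (Ω → ℝ)) (X : Ω → ℝ) : Prop :=
  X ∈ o ∧ ∃ M : ℝ, ∀ ω, |X ω| ≤ M

/-- The closed algebra `𝒜_X` generated by `X`: all `φ ∘ X` with `φ : ℝ → ℝ` continuous
(equivalent, by Tietze extension, to continuous functions on the closure of the image). -/
def ClosedAlg (X : Ω → ℝ) : Set (Ω → ℝ) :=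
  {Y | ∃ φ : ℝ → ℝ, Continuous φ ∧ Y = φ ∘ X}

/-- Positivity of a functional on `𝒪^∞`. -/
def PositiveFunc (o : Set (Ω → ℝ)) (E : (Ω → ℝ) → ℝ) : Prop :=
  ∀ X, MemBdd o X → (∀ ω, 0 ≤ X ω) → 0 ≤ E X

/-- Quasi-linearity: `E` is linear on each `𝒜_X`, `X ∈ 𝒪^∞`. -/
def QuasiLinear (o : Set (Ω → ℝ)) (E : (Ω → ℝ) → ℝ) : Prop :=
  ∀ X, MemBdd o X → ∀ Y ∈ ClosedAlg X, ∀ Z ∈ ClosedAlg X, ∀ a b : ℝ,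
    E (fun ω => a * Y ω + b * Z ω) = a * E Y + b * E Z

/-- `X ⪯ U` : there is a zero set `F` with `X ≤ 1_F` pointwise and `F ⊆ U`. -/
def PrecU (o : Set (Ω → ℝ)) (X : Ω → ℝ) (U : Set Ω) : Prop :=
  ∃ F : Set Ω, IsZeroSet o F ∧ (∀ ω, X ω ≤ F.indicator (fun _ => (1:ℝ)) ω) ∧ F ⊆ U

/-- An observable expectation: quasi-linear, positive, normalized, with monotone
convergence along increasing sequences in `𝒪^∞` converging pointwise in `𝒪^∞`. -/
def IsObsExp (o : Set (Ω → ℝ)) (E : (Ω → ℝ) → ℝ) : Prop :=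
  QuasiLinear o E ∧ PositiveFunc o E ∧ E (fun _ => 1) = 1 ∧
  (∀ (X : ℕ → Ω → ℝ) (Y : Ω → ℝ), (∀ n, MemBdd o (X n)) → MemBdd o Y →
    (∀ n ω, X n ω ≤ X (n+1) ω) →
    (∀ ω, Tendsto (fun n => X n ω) atTop (𝓝 (Y ω))) →
    Tendsto (fun n => E (X n)) atTop (𝓝 (E Y)))

/-- A quasi-additive probability: axioms (I)-(III) of an observable probability
together with inner regularity (IV'): `P U = sup {P F : F zero set, F ⊆ U}`. -/
def IsQuasiAddProb (o : Set (Ω → ℝ)) (P : Set Ω → ℝ) : Prop :=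
  (∀ A B : Set Ω, IsObsSet o A → IsObsSet o B → Disjoint A B →
    IsObsSet o (A ∪ B) → P (A ∪ B) = P A + P B) ∧
  (∀ A : Set Ω, IsObsSet o A → 0 ≤ P A) ∧
  (P Set.univ = 1) ∧
  (∀ U : Set Ω, IsCozeroSet o U →
    P U = sSup {r | ∃ F : Set Ω, IsZeroSet o F ∧ F ⊆ U ∧ r = P F})

/-!
Write `U = {g ≠ 0}` with `g ∈ 𝒪`. The co-zero sets `{|g| > 1/(k+1)}` increase to `U` and lie in
the zero sets `{|g| ≥ 1/(k+1)} ⊆ U`, so monotone convergence gives the first equality. For the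
second, `X ⪯ U` forces `∫ X dP ≤ P(X > 0) ≤ P(U)`; conversely, for a zero set `F ⊆ U`, clamping an
Urysohn function of the disjoint zero sets `F` and `Uᶜ` gives `X ⪯ U` with `∫ X dP ≥ P(F)`.

The distribution of an observable `X` is the Stieltjes measure of `t ↦ P(X ≤ t)`. It agrees with
`P ∘ X⁻¹` on open intervals, hence on bounded open sets (countable increasing unions of their
components) and on all open sets.
-/

open Set
open scoped ENNReal

lemma abs_add_abs_eq_zero {a b : ℝ} : |a| + |b| = 0 ↔ a = 0 ∧ b = 0 := by
  rw [add_eq_zero_iff_of_nonneg (abs_nonneg a) (abs_nonneg b), abs_eq_zero, abs_eq_zero]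

lemma monotone_Ioi_add_one_div (x : ℝ) : Monotone fun k : ℕ => Ioi (x + 1 / ((k : ℝ) + 1)) :=
  fun _ _ h => Ioi_subset_Ioi (by gcongr)

lemma monotone_Iio_sub_one_div (x : ℝ) : Monotone fun k : ℕ => Iio (x - 1 / ((k : ℝ) + 1)) :=
  fun _ _ h => Iio_subset_Iio (by gcongr)

lemma iUnion_Ioi_add_one_div (x : ℝ) : ⋃ k : ℕ, Ioi (x + 1 / ((k : ℝ) + 1)) = Ioi x := by
  refine Subset.antisymm (iUnion_subset fun k => Ioi_subset_Ioi (le_add_of_nonneg_right (by positivity)))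
    fun y hy => ?_
  obtain ⟨k, hk⟩ := exists_nat_one_div_lt (sub_pos.2 (show _ < y from hy))
  exact mem_iUnion.2 ⟨k, by rw [mem_Ioi]; linarith⟩

lemma iUnion_Iio_sub_one_div (x : ℝ) : ⋃ k : ℕ, Iio (x - 1 / ((k : ℝ) + 1)) = Iio x := by
  refine Subset.antisymm (iUnion_subset fun k => Iio_subset_Iio (sub_le_self _ (by positivity)))
    fun y hy => ?_
  obtain ⟨k, hk⟩ := exists_nat_one_div_lt (sub_pos.2 (show y < x from hy))
  exact mem_iUnion.2 ⟨k, by rw [mem_Iio]; linarith⟩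

lemma tendsto_add_one_div_nhdsGT (x : ℝ) :
    Tendsto (fun k : ℕ => x + 1 / ((k : ℝ) + 1)) atTop (𝓝[>] x) := by
  refine tendsto_nhdsWithin_of_tendsto_nhds_of_eventually_within _ ?_
    (Eventually.of_forall fun _ => lt_add_of_pos_right x Nat.one_div_pos_of_nat)
  simpa using tendsto_const_nhds (x := x).add tendsto_one_div_add_atTop_nhds_zero_nat

lemma tendsto_sub_one_div_nhdsLT (x : ℝ) :
    Tendsto (fun k : ℕ => x - 1 / ((k : ℝ) + 1)) atTop (𝓝[<] x) := by
  refine tendsto_nhdsWithin_of_tendsto_nhds_of_eventually_within _ ?_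
    (Eventually.of_forall fun _ => sub_lt_self x Nat.one_div_pos_of_nat)
  simpa using tendsto_const_nhds (x := x).sub tendsto_one_div_add_atTop_nhds_zero_nat

lemma IsOpen.eq_Ioo_csInf_csSup {α : Type*} [ConditionallyCompleteLinearOrder α]
    [TopologicalSpace α] [OrderTopology α] [DenselyOrdered α] [NoMinOrder α] [NoMaxOrder α]
    {s : Set α} (hs : IsOpen s) (hc : IsConnected s) (hb : BddBelow s) (ha : BddAbove s) :
    s = Ioo (sInf s) (sSup s) :=
  ((hs.subset_interior_iff.2 (subset_Icc_csInf_csSup hb ha)).trans interior_Icc.subset).antisymm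
    (hc.Ioo_csInf_csSup_subset hb ha)

structure IsOpenAdditive (ν : Set ℝ → ℝ≥0∞) : Prop where
  union : ∀ A B, IsOpen A → IsOpen B → Disjoint A B → ν (A ∪ B) = ν A + ν B
  tendsto_iUnion : ∀ W : ℕ → Set ℝ, (∀ n, IsOpen (W n)) → Monotone W →
    Tendsto (fun n => ν (W n)) atTop (𝓝 (ν (⋃ n, W n)))

namespace IsOpenAdditive

variable {ν₁ ν₂ : Set ℝ → ℝ≥0∞}

lemma eq_iUnion_of_forall_eq (h₁ : IsOpenAdditive ν₁) (h₂ : IsOpenAdditive ν₂) {W : ℕ → Set ℝ}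
    (hW : ∀ n, IsOpen (W n)) (hmono : Monotone W) (heq : ∀ n, ν₁ (W n) = ν₂ (W n)) :
    ν₁ (⋃ n, W n) = ν₂ (⋃ n, W n) :=
  tendsto_nhds_unique ((h₁.tendsto_iUnion W hW hmono).congr heq) (h₂.tendsto_iUnion W hW hmono)

/-- A bounded open set is the increasing union of finite unions of its connected components,
which are open intervals, indexed by the rationals they contain. -/
lemma eq_of_isBounded (h₁ : IsOpenAdditive ν₁) (h₂ : IsOpenAdditive ν₂)
    (hIoo : ∀ a b, ν₁ (Ioo a b) = ν₂ (Ioo a b)) {V : Set ℝ} (hV : IsOpen V)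
    (hbdd : Bornology.IsBounded V) : ν₁ V = ν₂ V := by
  obtain ⟨e, he⟩ := exists_surjective_nat ℚ
  set C : ℕ → Set ℝ := fun k => connectedComponentIn V (e k)
  have hCopen : ∀ k, IsOpen (C k) := fun k => hV.connectedComponentIn
  have hC : ∀ k, ν₁ (C k) = ν₂ (C k) := by
    intro k
    by_cases hk : (e k : ℝ) ∈ V
    · have hCbdd := hbdd.subset (connectedComponentIn_subset V (e k))
      rw [(hCopen k).eq_Ioo_csInf_csSup (isConnected_connectedComponentIn_iff.2 hk)
        hCbdd.bddBelow hCbdd.bddAbove]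
      exact hIoo _ _
    · simpa [C, connectedComponentIn_eq_empty hk] using hIoo 0 0
  have hunion : ⋃ k, C k = V := by
    refine Subset.antisymm (iUnion_subset fun k => connectedComponentIn_subset _ _) fun x hx => ?_
    obtain ⟨q, hq⟩ := Rat.denseRange_cast.exists_mem_open hV.connectedComponentIn
      ⟨x, mem_connectedComponentIn hx⟩
    obtain ⟨k, rfl⟩ := he q
    exact mem_iUnion.2 ⟨k, (connectedComponentIn_eq hq).subset (mem_connectedComponentIn hx)⟩
  have hacc : ∀ n, ν₁ (accumulate C n) = ν₂ (accumulate C n) := by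
    intro n
    induction n with
    | zero => simpa [accumulate_zero_nat] using hC 0
    | succ n ih =>
      rw [accumulate_succ]
      rcases (accumulate C n ∩ C (n + 1)).eq_empty_or_nonempty with hdisj | ⟨z, hzn, hz⟩
      · have hdisj := disjoint_iff_inter_eq_empty.2 hdisj
        have hopen : IsOpen (accumulate C n) := isOpen_biUnion fun k _ => hCopen k
        rw [h₁.union _ _ hopen (hCopen _) hdisj, h₂.union _ _ hopen (hCopen _) hdisj, ih, hC]
      · obtain ⟨k, hk, hzk⟩ := mem_accumulate.1 hzn
        have hsub : C (n + 1) ⊆ accumulate C n := by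
          rw [show C (n + 1) = C k from
            (connectedComponentIn_eq hz).trans (connectedComponentIn_eq hzk).symm]
          exact fun y hy => mem_accumulate.2 ⟨k, hk, hy⟩
        rwa [union_eq_self_of_subset_right hsub]
  rw [← hunion, ← iUnion_accumulate]
  exact h₁.eq_iUnion_of_forall_eq h₂ (fun n => isOpen_biUnion fun k _ => hCopen k)
    monotone_accumulate hacc

lemma eq_of_isOpen (h₁ : IsOpenAdditive ν₁) (h₂ : IsOpenAdditive ν₂)
    (hIoo : ∀ a b, ν₁ (Ioo a b) = ν₂ (Ioo a b)) {V : Set ℝ} (hV : IsOpen V) : ν₁ V = ν₂ V := by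
  have hunion : ⋃ n : ℕ, V ∩ Metric.ball 0 n = V := by
    rw [← inter_iUnion, Metric.iUnion_ball_nat, inter_univ]
  rw [← hunion]
  refine h₁.eq_iUnion_of_forall_eq h₂ (fun n => hV.inter Metric.isOpen_ball)
    (fun m n hmn => inter_subset_inter_right V (Metric.ball_subset_ball (by exact_mod_cast hmn)))
    fun n => h₁.eq_of_isBounded h₂ hIoo (hV.inter Metric.isOpen_ball)
      (Metric.isBounded_ball.subset inter_subset_right)

end IsOpenAdditive

lemma isOpenAdditive_measure (μ : Measure ℝ) : IsOpenAdditive μ where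
  union _ _ _ hB h := measure_union h hB.measurableSet
  tendsto_iUnion _ _ hW := tendsto_measure_iUnion_atTop hW

section Observables

variable {o : Set (Ω → ℝ)}

lemma IsObsAlg.comp_mem (hO : IsObsAlg o) {X : Ω → ℝ} (hX : X ∈ o) {φ : ℝ → ℝ}
    (hφ : Continuous φ) : (fun ω => φ (X ω)) ∈ o := by
  simpa using hO 1 one_pos (fun _ => X) (fun _ => hX) (fun v => φ (v 0))
    (hφ.comp (continuous_apply 0)).continuousOn

lemma IsObsAlg.comp₂_mem (hO : IsObsAlg o) {X Y : Ω → ℝ} (hX : X ∈ o) (hY : Y ∈ o)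
    {φ : ℝ × ℝ → ℝ} (hφ : ContinuousOn φ (range fun ω => (X ω, Y ω))) :
    (fun ω => φ (X ω, Y ω)) ∈ o := by
  have hpair : ContinuousOn (fun v : Fin 2 → ℝ => φ (v 0, v 1))
      (range fun ω i => ![X, Y] i ω) := by
    refine hφ.comp (by fun_prop) ?_
    rintro _ ⟨ω, rfl⟩
    exact ⟨ω, rfl⟩
  simpa using hO 2 two_pos ![X, Y] (by simp [Fin.forall_fin_two, hX, hY]) _ hpair

lemma IsObsAlg.isZeroSet_preimage (hO : IsObsAlg o) {X : Ω → ℝ} (hX : X ∈ o) {C : Set ℝ}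
    (hC : IsClosed C) : IsZeroSet o (X ⁻¹' C) := by
  rcases C.eq_empty_or_nonempty with rfl | hne
  · exact ⟨fun _ => 1, hO.comp_mem hX continuous_const, by ext; simp⟩
  · refine ⟨_, hO.comp_mem hX (Metric.continuous_infDist_pt C), ?_⟩
    ext ω
    simp [hC.mem_iff_infDist_zero hne]

lemma IsObsAlg.isCozeroSet_preimage (hO : IsObsAlg o) {X : Ω → ℝ} (hX : X ∈ o) {V : Set ℝ}
    (hV : IsOpen V) : IsCozeroSet o (X ⁻¹' V) :=
  hO.isZeroSet_preimage hX hV.isClosed_compl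

lemma IsObsAlg.isZeroSet_empty (hO : IsObsAlg o) (ho : o.Nonempty) :
    IsZeroSet o (∅ : Set Ω) := by
  simpa using hO.isZeroSet_preimage ho.some_mem isClosed_empty

lemma IsObsAlg.isZeroSet_union (hO : IsObsAlg o) {F G : Set Ω} (hF : IsZeroSet o F)
    (hG : IsZeroSet o G) : IsZeroSet o (F ∪ G) := by
  obtain ⟨f, hf, rfl⟩ := hF
  obtain ⟨g, hg, rfl⟩ := hG
  refine ⟨_, hO.comp₂_mem hf hg (φ := fun p => p.1 * p.2) (by fun_prop), ?_⟩
  ext ω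
  simp

lemma IsObsAlg.isZeroSet_inter (hO : IsObsAlg o) {F G : Set Ω} (hF : IsZeroSet o F)
    (hG : IsZeroSet o G) : IsZeroSet o (F ∩ G) := by
  obtain ⟨f, hf, rfl⟩ := hF
  obtain ⟨g, hg, rfl⟩ := hG
  refine ⟨_, hO.comp₂_mem hf hg (φ := fun p => |p.1| + |p.2|) (by fun_prop), ?_⟩
  ext ω
  simp [abs_add_abs_eq_zero]

/-- Urysohn's lemma for zero sets: `|f| / (|f| + |g|)` is continuous away from the common zeros
of `f` and `g`, which is all that membership in `o` requires. -/
lemma IsObsAlg.exists_zero_one_of_disjoint (hO : IsObsAlg o) {F G : Set Ω} (hF : IsZeroSet o F)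
    (hG : IsZeroSet o G) (hFG : Disjoint F G) :
    ∃ Y ∈ o, EqOn Y 0 F ∧ EqOn Y 1 G := by
  obtain ⟨f, hf, rfl⟩ := hF
  obtain ⟨g, hg, rfl⟩ := hG
  have hne : ∀ ω, |f ω| + |g ω| ≠ 0 := fun ω h => by
    rw [abs_add_abs_eq_zero] at h
    exact hFG.notMem_of_mem_left h.1 h.2
  refine ⟨_, hO.comp₂_mem hf hg (φ := fun p => |p.1| / (|p.1| + |p.2|)) ?_, ?_, ?_⟩
  · refine ContinuousOn.div (by fun_prop) (by fun_prop) ?_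
    rintro _ ⟨ω, rfl⟩
    exact hne ω
  · intro ω hω
    simp_all
  · intro ω hω
    have := hne ω
    simp_all

end Observables

namespace IsObsProb

variable {o : Set (Ω → ℝ)} {P : Set Ω → ℝ}

lemma apply_empty (hP : IsObsProb o P) (h : IsZeroSet o (∅ : Set Ω)) : P ∅ = 0 := by
  have := hP.1 ∅ ∅ (Or.inl h) (Or.inl h) (disjoint_empty _) (by rw [union_empty]; exact Or.inl h)
  simpa using this

lemma le_of_subset (hP : IsObsProb o P) {A B : Set Ω} (hA : IsObsSet o A)
    (hBA : IsObsSet o (B \ A)) (hB : IsObsSet o B) (hAB : A ⊆ B) : P A ≤ P B := by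
  have hadd := hP.1 A (B \ A) hA hBA disjoint_sdiff_right (by rwa [union_sdiff_cancel hAB])
  rw [union_sdiff_cancel hAB] at hadd
  linarith [hP.2.1 _ hBA]

lemma le_of_zeroSet_subset (hO : IsObsAlg o) (hP : IsObsProb o P) {F U : Set Ω}
    (hF : IsZeroSet o F) (hU : IsCozeroSet o U) (hFU : F ⊆ U) : P F ≤ P U := by
  refine hP.le_of_subset (Or.inl hF) (Or.inr ?_) (Or.inr hU) hFU
  rw [IsCozeroSet, sdiff_eq, compl_inter, compl_compl]
  exact hO.isZeroSet_union hU hF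

lemma le_of_cozeroSet_subset (hO : IsObsAlg o) (hP : IsObsProb o P) {U F : Set Ω}
    (hU : IsCozeroSet o U) (hF : IsZeroSet o F) (hUF : U ⊆ F) : P U ≤ P F :=
  hP.le_of_subset (Or.inr hU) (Or.inl (hO.isZeroSet_inter hF hU)) (Or.inl hF) hUF

lemma add_apply_compl (hO : IsObsAlg o) (hP : IsObsProb o P) {F : Set Ω} (hF : IsZeroSet o F) :
    P F + P Fᶜ = 1 := by
  have hempty : IsZeroSet o (∅ : Set Ω) := hO.isZeroSet_empty (hF.imp fun _ h => h.1)
  have huniv : IsObsSet o (univ : Set Ω) := Or.inr (by rwa [IsCozeroSet, compl_univ])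
  rw [← hP.2.2.1, ← hP.1 F Fᶜ (Or.inl hF) (Or.inr (by rwa [IsCozeroSet, compl_compl]))
    disjoint_compl_right (by rwa [union_compl_self]), union_compl_self]

variable {X : Ω → ℝ}

lemma tendsto_preimage_iUnion (hO : IsObsAlg o) (hP : IsObsProb o P) (hX : X ∈ o)
    {V : ℕ → Set ℝ} (hV : ∀ n, IsOpen (V n)) (hmono : Monotone V) :
    Tendsto (fun n => P (X ⁻¹' V n)) atTop (𝓝 (P (X ⁻¹' ⋃ n, V n))) :=
  hP.2.2.2 _ _ (fun n => hO.isCozeroSet_preimage hX (hV n)) (fun _ _ h => preimage_mono (hmono h))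
    (hO.isCozeroSet_preimage hX (isOpen_iUnion hV)) preimage_iUnion.symm

lemma tendsto_preimage_Ioi_add (hO : IsObsAlg o) (hP : IsObsProb o P) (hX : X ∈ o) (x : ℝ) :
    Tendsto (fun k : ℕ => P (X ⁻¹' Ioi (x + 1 / ((k : ℝ) + 1)))) atTop (𝓝 (P (X ⁻¹' Ioi x))) := by
  simpa only [iUnion_Ioi_add_one_div] using
    hP.tendsto_preimage_iUnion hO hX (fun _ => isOpen_Ioi) (monotone_Ioi_add_one_div x)

lemma tendsto_preimage_Iio_sub (hO : IsObsAlg o) (hP : IsObsProb o P) (hX : X ∈ o) (x : ℝ) :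
    Tendsto (fun k : ℕ => P (X ⁻¹' Iio (x - 1 / ((k : ℝ) + 1)))) atTop (𝓝 (P (X ⁻¹' Iio x))) := by
  simpa only [iUnion_Iio_sub_one_div] using
    hP.tendsto_preimage_iUnion hO hX (fun _ => isOpen_Iio) (monotone_Iio_sub_one_div x)

end IsObsProb

section Cdf

variable {o : Set (Ω → ℝ)} {P : Set Ω → ℝ} {X : Ω → ℝ}
  (hO : IsObsAlg o) (hP : IsObsProb o P) (hX : X ∈ o)

include hO hP hX

lemma monotone_preimage_Iic : Monotone fun t => P (X ⁻¹' Iic t) := by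
  intro s t hst
  rcases hst.eq_or_lt with rfl | hlt
  · rfl
  calc P (X ⁻¹' Iic s) ≤ P (X ⁻¹' Iio t) :=
        hP.le_of_zeroSet_subset hO (hO.isZeroSet_preimage hX isClosed_Iic)
          (hO.isCozeroSet_preimage hX isOpen_Iio) (preimage_mono (Iic_subset_Iio.2 hlt))
    _ ≤ P (X ⁻¹' Iic t) :=
        hP.le_of_cozeroSet_subset hO (hO.isCozeroSet_preimage hX isOpen_Iio)
          (hO.isZeroSet_preimage hX isClosed_Iic) (preimage_mono Iio_subset_Iic_self)

lemma preimage_Iic_eq_one_sub (t : ℝ) : P (X ⁻¹' Iic t) = 1 - P (X ⁻¹' Ioi t) := by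
  have := hP.add_apply_compl hO (hO.isZeroSet_preimage hX (isClosed_Iic (a := t)))
  rw [← preimage_compl, compl_Iic] at this
  linarith

lemma continuousWithinAt_preimage_Iic (x : ℝ) :
    ContinuousWithinAt (fun t => P (X ⁻¹' Iic t)) (Ici x) x := by
  have hmono := monotone_preimage_Iic hO hP hX
  rw [← continuousWithinAt_Ioi_iff_Ici, hmono.continuousWithinAt_Ioi_iff_rightLim_eq]
  refine tendsto_nhds_unique ((hmono.tendsto_rightLim x).comp (tendsto_add_one_div_nhdsGT x)) ?_
  simp only [Function.comp_def, preimage_Iic_eq_one_sub hO hP hX]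
  exact (hP.tendsto_preimage_Ioi_add hO hX x).const_sub 1

def obsCdf : StieltjesFunction ℝ where
  toFun t := P (X ⁻¹' Iic t)
  mono' := monotone_preimage_Iic hO hP hX
  right_continuous' := continuousWithinAt_preimage_Iic hO hP hX

lemma obsCdf_apply (t : ℝ) : obsCdf hO hP hX t = P (X ⁻¹' Iic t) := rfl

lemma leftLim_obsCdf (b : ℝ) : Function.leftLim (obsCdf hO hP hX) b = P (X ⁻¹' Iio b) := by
  refine tendsto_nhds_unique (((obsCdf hO hP hX).mono.tendsto_leftLim b).comp
    (tendsto_sub_one_div_nhdsLT b)) (tendsto_of_tendsto_of_tendsto_of_le_of_le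
      (hP.tendsto_preimage_Iio_sub hO hX b) tendsto_const_nhds (fun k => ?_) fun k => ?_)
  · exact hP.le_of_cozeroSet_subset hO (hO.isCozeroSet_preimage hX isOpen_Iio)
      (hO.isZeroSet_preimage hX isClosed_Iic) (preimage_mono Iio_subset_Iic_self)
  · refine hP.le_of_zeroSet_subset hO (hO.isZeroSet_preimage hX isClosed_Iic)
      (hO.isCozeroSet_preimage hX isOpen_Iio) (preimage_mono (Iic_subset_Iio.2 ?_))
    exact sub_lt_self _ (by positivity)

lemma obsCdf_measure_Ioo (a b : ℝ) :
    (obsCdf hO hP hX).measure (Ioo a b) = ENNReal.ofReal (P (X ⁻¹' Ioo a b)) := by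
  rw [StieltjesFunction.measure_Ioo, leftLim_obsCdf, obsCdf_apply]
  rcases le_or_gt b a with hba | hab
  · rw [Ioo_eq_empty (not_lt.2 hba), preimage_empty, hP.apply_empty (hO.isZeroSet_empty ⟨X, hX⟩),
      ENNReal.ofReal_zero, ENNReal.ofReal_eq_zero, sub_nonpos]
    exact hP.le_of_cozeroSet_subset hO (hO.isCozeroSet_preimage hX isOpen_Iio)
      (hO.isZeroSet_preimage hX isClosed_Iic) (preimage_mono (Iio_subset_Iic_iff.2 hba))
  · have hunion : X ⁻¹' Iic a ∪ X ⁻¹' Ioo a b = X ⁻¹' Iio b := by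
      rw [← preimage_union, Iic_union_Ioo_eq_Iio hab]
    have hadd := hP.1 _ _ (Or.inl (hO.isZeroSet_preimage hX isClosed_Iic))
      (Or.inr (hO.isCozeroSet_preimage hX isOpen_Ioo))
      ((Iic_disjoint_Ioi le_rfl).mono_right Ioo_subset_Ioi_self |>.preimage X)
      (by rw [hunion]; exact Or.inr (hO.isCozeroSet_preimage hX isOpen_Iio))
    rw [hunion] at hadd
    rw [hadd, add_sub_cancel_left]

end Cdf

lemma IsObsProb.isOpenAdditive_preimage {o : Set (Ω → ℝ)} {P : Set Ω → ℝ} {X : Ω → ℝ}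
    (hO : IsObsAlg o) (hP : IsObsProb o P) (hX : X ∈ o) :
    IsOpenAdditive fun V => ENNReal.ofReal (P (X ⁻¹' V)) where
  union A B hA hB h := by
    have hcoz := fun {V : Set ℝ} (hV : IsOpen V) => hO.isCozeroSet_preimage hX hV
    rw [preimage_union, hP.1 _ _ (Or.inr (hcoz hA)) (Or.inr (hcoz hB)) (h.preimage X)
      (by rw [← preimage_union]; exact Or.inr (hcoz (hA.union hB))),
      ENNReal.ofReal_add (hP.2.1 _ (Or.inr (hcoz hA))) (hP.2.1 _ (Or.inr (hcoz hB)))]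
  tendsto_iUnion W hW hmono :=
    (ENNReal.continuous_ofReal.tendsto _).comp (hP.tendsto_preimage_iUnion hO hX hW hmono)

theorem IsObsProb.exists_isDistribution {o : Set (Ω → ℝ)} {P : Set Ω → ℝ} {X : Ω → ℝ}
    (hO : IsObsAlg o) (hP : IsObsProb o P) (hX : X ∈ o) : ∃ μ, IsDistribution o P X μ := by
  have hopen : ∀ V, IsOpen V → (obsCdf hO hP hX).measure V = ENNReal.ofReal (P (X ⁻¹' V)) :=
    fun V hV => (isOpenAdditive_measure _).eq_of_isOpen (hP.isOpenAdditive_preimage hO hX)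
      (obsCdf_measure_Ioo hO hP hX) hV
  refine ⟨_, ⟨?_⟩, hopen⟩
  rw [hopen univ isOpen_univ, preimage_univ, hP.2.2.1, ENNReal.ofReal_one]

namespace IsDistribution

variable {o : Set (Ω → ℝ)} {P : Set Ω → ℝ} {X : Ω → ℝ} {μ : Measure ℝ}
  (hO : IsObsAlg o) (hP : IsObsProb o P) (hX : X ∈ o)

include hO hP hX

lemma ae_mem (hμ : IsDistribution o P X μ) {C : Set ℝ} (hC : IsClosed C)
    (hXC : ∀ ω, X ω ∈ C) : ∀ᵐ t ∂μ, t ∈ C := by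
  have hempty : X ⁻¹' Cᶜ = ∅ := eq_empty_of_forall_notMem fun ω h => h (hXC ω)
  rw [ae_iff, ← compl_def, hμ.2 _ hC.isOpen_compl, hempty,
    hP.apply_empty (hO.isZeroSet_empty ⟨X, hX⟩), ENNReal.ofReal_zero]

lemma measureReal_isOpen (hμ : IsDistribution o P X μ) {V : Set ℝ} (hV : IsOpen V) :
    μ.real V = P (X ⁻¹' V) := by
  rw [measureReal_def, hμ.2 V hV,
    ENNReal.toReal_ofReal (hP.2.1 _ (Or.inr (hO.isCozeroSet_preimage hX hV)))]

lemma measureReal_isClosed (hμ : IsDistribution o P X μ) {C : Set ℝ} (hC : IsClosed C) :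
    μ.real C = P (X ⁻¹' C) := by
  have := hμ.1
  have hcompl := hP.add_apply_compl hO (hO.isZeroSet_preimage hX hC)
  rw [← preimage_compl, ← hμ.measureReal_isOpen hO hP hX hC.isOpen_compl,
    probReal_compl_eq_one_sub hC.measurableSet] at hcompl
  linarith

lemma integral_le_of_le_one (hμ : IsDistribution o P X μ) (hX1 : ∀ ω, X ω ≤ 1) :
    ∫ t, t ∂μ ≤ P (X ⁻¹' Ioi 0) := by
  have := hμ.1
  by_cases hint : Integrable (fun t => t) μ
  swap
  · rw [integral_undef hint]
    exact hP.2.1 _ (Or.inr (hO.isCozeroSet_preimage hX isOpen_Ioi))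
  have hle : ∀ᵐ t ∂μ, t ≤ (Ioi 0).indicator 1 t := by
    filter_upwards [hμ.ae_mem hO hP hX isClosed_Iic hX1] with t (ht : t ≤ 1)
    by_cases h : 0 < t
    · simpa [h] using ht
    · simpa [h] using not_lt.1 h
  calc ∫ t, t ∂μ ≤ ∫ t, (Ioi 0).indicator 1 t ∂μ :=
        integral_mono_ae hint ((integrable_const 1).indicator measurableSet_Ioi) hle
    _ = P (X ⁻¹' Ioi 0) := by
        rw [integral_indicator_one measurableSet_Ioi, hμ.measureReal_isOpen hO hP hX isOpen_Ioi]

lemma le_integral_of_mem_Icc (hμ : IsDistribution o P X μ) (hX01 : ∀ ω, X ω ∈ Icc 0 1) :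
    P (X ⁻¹' Ici 1) ≤ ∫ t, t ∂μ := by
  have := hμ.1
  have hae := hμ.ae_mem hO hP hX isClosed_Icc hX01
  have hint : Integrable (fun t => t) μ := by
    refine (integrable_const 1).mono' aestronglyMeasurable_id ?_
    filter_upwards [hae] with t ht
    rw [Real.norm_eq_abs, abs_le]
    exact ⟨by linarith [ht.1], ht.2⟩
  have hle : ∀ᵐ t ∂μ, (Ici 1).indicator 1 t ≤ t := by
    filter_upwards [hae] with t ht
    by_cases h : 1 ≤ t
    · simp [h]
    · simpa [h] using ht.1
  calc P (X ⁻¹' Ici 1) = ∫ t, (Ici 1).indicator 1 t ∂μ := by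
        rw [integral_indicator_one measurableSet_Ici, hμ.measureReal_isClosed hO hP hX isClosed_Ici]
    _ ≤ ∫ t, t ∂μ := integral_mono_ae ((integrable_const 1).indicator measurableSet_Ici) hint hle

end IsDistribution

section InnerRegularity

variable {o : Set (Ω → ℝ)} {P : Set Ω → ℝ}

theorem IsObsProb.eq_sSup_zeroSet (hO : IsObsAlg o) (hP : IsObsProb o P) {U : Set Ω}
    (hU : IsCozeroSet o U) :
    P U = sSup {r | ∃ F : Set Ω, IsZeroSet o F ∧ F ⊆ U ∧ r = P F} := by
  obtain ⟨g, hg, hUg⟩ := id hU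
  have habs : (fun ω => |g ω|) ∈ o := hO.comp_mem hg continuous_abs
  have hU_eq : U = (fun ω => |g ω|) ⁻¹' Ioi 0 := by
    rw [← compl_compl U, hUg]
    ext ω
    simp
  set S := {r | ∃ F : Set Ω, IsZeroSet o F ∧ F ⊆ U ∧ r = P F}
  have hbdd : ∀ r ∈ S, r ≤ P U := by
    rintro _ ⟨F, hF, hFU, rfl⟩
    exact hP.le_of_zeroSet_subset hO hF hU hFU
  refine le_antisymm ?_ (csSup_le ⟨_, ∅, hO.isZeroSet_empty ⟨g, hg⟩, empty_subset U, rfl⟩ hbdd)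
  have hlim := hP.tendsto_preimage_Ioi_add hO habs 0
  rw [← hU_eq] at hlim
  refine le_of_tendsto hlim (Eventually.of_forall fun k => ?_)
  have hzero := hO.isZeroSet_preimage habs (isClosed_Ici (a := 0 + 1 / ((k : ℝ) + 1)))
  calc P ((fun ω => |g ω|) ⁻¹' Ioi (0 + 1 / ((k : ℝ) + 1)))
      ≤ P ((fun ω => |g ω|) ⁻¹' Ici (0 + 1 / ((k : ℝ) + 1))) :=
        hP.le_of_cozeroSet_subset hO (hO.isCozeroSet_preimage habs isOpen_Ioi) hzero
          (preimage_mono Ioi_subset_Ici_self)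
    _ ≤ _ := by
        refine le_csSup ⟨P U, hbdd⟩ ⟨_, hzero, ?_, rfl⟩
        rw [hU_eq]
        exact preimage_mono (Ici_subset_Ioi.2 (by positivity))

lemma integral_le_of_precU (hO : IsObsAlg o) (hP : IsObsProb o P) {U : Set Ω}
    (hU : IsCozeroSet o U) {X : Ω → ℝ} (hX : X ∈ o) (hXU : PrecU o X U) {μ : Measure ℝ}
    (hμ : IsDistribution o P X μ) : ∫ t, t ∂μ ≤ P U := by
  obtain ⟨F, hF, hXF, hFU⟩ := hXU
  have hX1 : ∀ ω, X ω ≤ 1 := fun ω => (hXF ω).trans (by unfold indicator; split_ifs <;> norm_num)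
  have hsupp : X ⁻¹' Ioi 0 ⊆ F := fun ω (hω : 0 < X ω) => by
    by_contra h
    linarith [indicator_of_notMem h (fun _ => (1 : ℝ)) ▸ hXF ω]
  calc ∫ t, t ∂μ ≤ P (X ⁻¹' Ioi 0) := hμ.integral_le_of_le_one hO hP hX hX1
    _ ≤ P F := hP.le_of_cozeroSet_subset hO (hO.isCozeroSet_preimage hX isOpen_Ioi) hF hsupp
    _ ≤ P U := hP.le_of_zeroSet_subset hO hF hU hFU

lemma exists_precU_le_integral (hO : IsObsAlg o) (hP : IsObsProb o P) {F U : Set Ω}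
    (hF : IsZeroSet o F) (hU : IsCozeroSet o U) (hFU : F ⊆ U) :
    ∃ X ∈ o, PrecU o X U ∧ ∃ μ, IsDistribution o P X μ ∧ P F ≤ ∫ t, t ∂μ := by
  obtain ⟨Y, hY, hYF, hYU⟩ :=
    hO.exists_zero_one_of_disjoint hF hU (disjoint_compl_right.mono_left hFU)
  -- `X = 1` on the co-zero set `{Y < 1/3} ⊇ F`, and `X = 0` off the zero set `{Y ≤ 2/3} ⊆ U`
  set X : Ω → ℝ := fun ω => min 1 (max 0 (2 - 3 * Y ω))
  have hX : X ∈ o := hO.comp_mem hY (φ := fun t => min 1 (max 0 (2 - 3 * t))) (by fun_prop)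
  have hX01 : ∀ ω, X ω ∈ Icc 0 1 := fun ω =>
    ⟨le_min zero_le_one (le_max_left _ _), min_le_left _ _⟩
  obtain ⟨μ, hμ⟩ := hP.exists_isDistribution hO hX
  refine ⟨X, hX, ⟨Y ⁻¹' Iic (2 / 3), hO.isZeroSet_preimage hY isClosed_Iic, fun ω => ?_,
    fun ω hω => ?_⟩, μ, hμ, ?_⟩
  · by_cases h : Y ω ≤ 2 / 3
    · simpa [indicator_of_mem (show ω ∈ Y ⁻¹' Iic (2 / 3) from h)] using (hX01 ω).2
    · rw [indicator_of_notMem (show ω ∉ Y ⁻¹' Iic (2 / 3) from h)]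
      exact min_le_of_right_le (max_le le_rfl (by linarith))
  · by_contra h
    have h1 : Y ω = 1 := hYU (show ω ∈ Uᶜ from h)
    linarith [show Y ω ≤ 2 / 3 from hω]
  · have hW : Y ⁻¹' Iio (1 / 3) ⊆ X ⁻¹' Ici 1 := fun ω (hω : Y ω < 1 / 3) =>
      le_min le_rfl (le_max_of_le_right (show (1 : ℝ) ≤ 2 - 3 * Y ω by linarith))
    calc P F ≤ P (Y ⁻¹' Iio (1 / 3)) :=
          hP.le_of_zeroSet_subset hO hF (hO.isCozeroSet_preimage hY isOpen_Iio)
            fun ω hω => show Y ω < 1 / 3 by rw [hYF hω]; norm_num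
      _ ≤ P (X ⁻¹' Ici 1) := hP.le_of_cozeroSet_subset hO (hO.isCozeroSet_preimage hY isOpen_Iio)
            (hO.isZeroSet_preimage hX isClosed_Ici) hW
      _ ≤ ∫ t, t ∂μ := hμ.le_integral_of_mem_Icc hO hP hX hX01

end InnerRegularity

theorem obsProb_inner_regular_general {Ω : Type*}
    (o : Set (Ω → ℝ)) (hO : IsObsAlg o) (P : Set Ω → ℝ) (hP : IsObsProb o P)
    (U : Set Ω) (hU : IsCozeroSet o U) :
    P U = sSup {r | ∃ F : Set Ω, IsZeroSet o F ∧ F ⊆ U ∧ r = P F} ∧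
    P U = sSup {r | ∃ X ∈ o, PrecU o X U ∧
      ∃ μ : Measure ℝ, IsDistribution o P X μ ∧ r = ∫ t, t ∂μ} := by
  set S := {r | ∃ X ∈ o, PrecU o X U ∧ ∃ μ : Measure ℝ, IsDistribution o P X μ ∧ r = ∫ t, t ∂μ}
  have hzero := hP.eq_sSup_zeroSet hO hU
  have hbdd : ∀ r ∈ S, r ≤ P U := by
    rintro _ ⟨X, hX, hXU, μ, hμ, rfl⟩
    exact integral_le_of_precU hO hP hU hX hXU hμ
  have hempty : IsZeroSet o (∅ : Set Ω) := hO.isZeroSet_empty (hU.imp fun _ h => h.1)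
  obtain ⟨X₀, hX₀, hX₀U, μ₀, hμ₀, -⟩ := exists_precU_le_integral hO hP hempty hU (empty_subset U)
  refine ⟨hzero, le_antisymm ?_ (csSup_le ⟨_, X₀, hX₀, hX₀U, μ₀, hμ₀, rfl⟩ hbdd)⟩
  rw [hzero]
  refine csSup_le ⟨_, ∅, hempty, empty_subset U, rfl⟩ ?_
  rintro _ ⟨F, hF, hFU, rfl⟩
  obtain ⟨X, hX, hXU, μ, hμ, hle⟩ := exists_precU_le_integral hO hP hF hU hFU
  exact hle.trans (le_csSup ⟨P U, hbdd⟩ ⟨X, hX, hXU, μ, hμ, rfl⟩)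

/-- inner regularity of an observable probability,
`P U = sup {P F : F zero set ⊆ U} = sup {∫ X dP : X ⪯ U}`. -/
theorem obsProb_inner_regular {Ω : Type*} [Nonempty Ω]
    (o : Set (Ω → ℝ)) (hO : IsObsAlg o) (P : Set Ω → ℝ) (hP : IsObsProb o P)
    (U : Set Ω) (hU : IsCozeroSet o U) :
    P U = sSup {r | ∃ F : Set Ω, IsZeroSet o F ∧ F ⊆ U ∧ r = P F} ∧
    P U = sSup {r | ∃ X ∈ o, PrecU o X U ∧
      ∃ μ : Measure ℝ, IsDistribution o P X μ ∧ r = ∫ t, t ∂μ} :=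
  obsProb_inner_regular_general o hO P hP U hU
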